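/- arXiv:2310.15409 — 6 statements merged into one kernel-verified Lean document; each statement's English description precedes it below -/
import Mathlib

section
/- Every complex root z₀ of an improper polynomial Q(z) = z^m + u_{m-1}z^{m-1} + ... + u_0 satisfies |z₀| ≥ 1. -/
/-- Every complex root of an improper polynomial has modulus at least 1. -/
theorem improper_root_abs_ge_one (m : ℕ) (hm : 1 ≤ m) (u : ℕ → ℝ)
    (h1 : 1 ≤ u (m - 1))
    (hmono : ∀ j, j + 1 ≤ m - 1 → u (j + 1) ≤ u j)
    (z₀ : ℂ)
    (hroot : z₀ ^ m + ∑ j ∈ Finset.range m, (u j : ℂ) * z₀ ^ j = 0) :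
    1 ≤ ‖z₀‖ := by
  by_contra hlt
  push_neg at hlt
  obtain ⟨n, rfl⟩ : ∃ n, m = n + 1 := ⟨m - 1, (Nat.succ_pred_eq_of_pos hm).symm⟩
  simp only [Nat.add_sub_cancel] at h1 hmono
  set r := ‖z₀‖ with hr
  have hr0 : 0 ≤ r := norm_nonneg _
  -- sum identities
  have s1 : ∑ j ∈ Finset.range n, ((u j : ℂ) - (u (j+1) : ℂ)) * z₀ ^ (j+1)
      = (∑ j ∈ Finset.range n, (u j : ℂ) * z₀ ^ (j+1))
        - ∑ j ∈ Finset.range n, (u (j+1) : ℂ) * z₀ ^ (j+1) := by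
    rw [← Finset.sum_sub_distrib]
    exact Finset.sum_congr rfl fun j _ => by ring
  have s2 : ∑ j ∈ Finset.range (n+1), (u j : ℂ) * z₀ ^ j
      = (u 0 : ℂ) + ∑ j ∈ Finset.range n, (u (j+1) : ℂ) * z₀ ^ (j+1) := by
    rw [Finset.sum_range_succ']
    simp [add_comm]
  have s3 : z₀ * ∑ j ∈ Finset.range (n+1), (u j : ℂ) * z₀ ^ j
      = (u n : ℂ) * z₀ ^ (n+1) + ∑ j ∈ Finset.range n, (u j : ℂ) * z₀ ^ (j+1) := by
    rw [Finset.mul_sum, Finset.sum_range_succ, add_comm]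
    congr 1
    · ring
    · exact Finset.sum_congr rfl fun j _ => by ring
  -- key equation obtained by multiplying the root equation by (z₀ - 1)
  have key : z₀ ^ (n + 2) + ((u n : ℂ) - 1) * z₀ ^ (n + 1)
      + ∑ j ∈ Finset.range n, ((u j : ℂ) - (u (j+1) : ℂ)) * z₀ ^ (j + 1) = (u 0 : ℂ) := by
    linear_combination (z₀ - 1) * hroot + s1 - s3 + s2
  -- triangle inequality
  have h_a : ‖z₀ ^ (n+2)‖ ≤ r ^ (n+2) := by rw [norm_pow]
  have h_b : ‖((u n : ℂ) - 1) * z₀ ^ (n+1)‖ ≤ (u n - 1) * r ^ (n+1) := by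
    rw [norm_mul, norm_pow]
    apply mul_le_mul_of_nonneg_right _ (pow_nonneg hr0 _)
    rw [← Complex.ofReal_one, ← Complex.ofReal_sub, Complex.norm_real, Real.norm_eq_abs,
      abs_of_nonneg (by linarith : (0:ℝ) ≤ u n - 1)]
  have h_c : ‖(∑ j ∈ Finset.range n, ((u j : ℂ) - (u (j+1) : ℂ)) * z₀ ^ (j+1))‖
      ≤ ∑ j ∈ Finset.range n, (u j - u (j+1)) * r ^ (j+1) := by
    refine le_trans (norm_sum_le _ _) (Finset.sum_le_sum fun j hj => ?_)
    have hj' : u (j+1) ≤ u j := hmono j (by simpa using Finset.mem_range.mp hj)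
    rw [norm_mul, norm_pow, ← Complex.ofReal_sub, Complex.norm_real, Real.norm_eq_abs,
      abs_of_nonneg (by linarith : (0:ℝ) ≤ u j - u (j+1))]
  have habs : |u 0| ≤ r ^ (n+2) + (u n - 1) * r ^ (n+1)
      + ∑ j ∈ Finset.range n, (u j - u (j+1)) * r ^ (j+1) := by
    have h := congrArg norm key
    rw [Complex.norm_real, Real.norm_eq_abs] at h
    rw [← h]
    exact le_trans (norm_add_le _ _)
      (add_le_add (le_trans (norm_add_le _ _) (add_le_add h_a h_b)) h_c)
  -- strict bound
  have hstrict : r ^ (n+2) + (u n - 1) * r ^ (n+1)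
      + ∑ j ∈ Finset.range n, (u j - u (j+1)) * r ^ (j+1)
      < 1 + (u n - 1) + ∑ j ∈ Finset.range n, (u j - u (j+1)) := by
    have t1 : r ^ (n+2) < 1 := pow_lt_one₀ hr0 hlt (by omega)
    have t2 : (u n - 1) * r ^ (n+1) ≤ (u n - 1) * 1 :=
      mul_le_mul_of_nonneg_left (pow_le_one₀ hr0 hlt.le) (by linarith)
    have t3 : ∑ j ∈ Finset.range n, (u j - u (j+1)) * r ^ (j+1)
        ≤ ∑ j ∈ Finset.range n, (u j - u (j+1)) := by
      refine Finset.sum_le_sum fun j hj => ?_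
      have hj' : u (j+1) ≤ u j := hmono j (by simpa using Finset.mem_range.mp hj)
      calc (u j - u (j+1)) * r ^ (j+1) ≤ (u j - u (j+1)) * 1 :=
            mul_le_mul_of_nonneg_left (pow_le_one₀ hr0 hlt.le) (by linarith)
        _ = u j - u (j+1) := mul_one _
    linarith
  have tel : ∑ j ∈ Finset.range n, (u j - u (j+1)) = u 0 - u n :=
    Finset.sum_range_sub' u n
  have : |u 0| < u 0 := by
    calc |u 0| ≤ _ := habs
      _ < 1 + (u n - 1) + ∑ j ∈ Finset.range n, (u j - u (j+1)) := hstrict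
      _ = u 0 := by rw [tel]; ring
  linarith [le_abs_self (u 0)]
end

section
/- If Q(z) = z^m + u_{m-1}z^{m-1} + ... + u_0 is an improper polynomial, then for all z with |z| < 1, one has |z^{m+1} + Σ_{j=1}^{m} (u_{j-1} - u_j) z^j| < u_0, where u_m = 1; in particular Q has no root in the open unit disk. -/
lemma improper_aux_sum (u : ℕ → ℝ) (z : ℂ) (m : ℕ) :
    ∑ j ∈ Finset.Icc 1 m, ((u (j - 1) - u j : ℝ) : ℂ) * z ^ j
      = (z - 1) * ∑ j ∈ Finset.range m, (u j : ℂ) * z ^ j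
        + (u 0 : ℂ) - (u m : ℂ) * z ^ m := by
  induction m with
  | zero => simp
  | succ n ih =>
    rw [Finset.sum_Icc_succ_top (by omega), ih, Finset.sum_range_succ]
    simp only [Nat.add_sub_cancel, Complex.ofReal_sub]
    ring

lemma improper_aux_tel (u : ℕ → ℝ) (m : ℕ) :
    ∑ j ∈ Finset.Icc 1 m, (u (j - 1) - u j) = u 0 - u m := by
  induction m with
  | zero => simp
  | succ n ih =>
    rw [Finset.sum_Icc_succ_top (by omega), ih]
    simp only [Nat.add_sub_cancel]
    ring

/-- For an improper polynomial Q, with u_m = 1, and |z| < 1 we have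
    |z^{m+1} + Σ_{j=1}^m (u_{j-1} - u_j) z^j| < u_0; in particular Q has no
    root in the open unit disk. -/
theorem improper_estimate_in_disk (m : ℕ) (hm : 1 ≤ m) (u : ℕ → ℝ)
    (hum : u m = 1)
    (h1 : 1 ≤ u (m - 1))
    (hmono : ∀ j, j + 1 ≤ m - 1 → u (j + 1) ≤ u j)
    (z : ℂ) (hz : ‖z‖ < 1) :
    ‖z ^ (m + 1) +
        ∑ j ∈ Finset.Icc 1 m, ((u (j - 1) - u j : ℝ) : ℂ) * z ^ j‖ < u 0 ∧
    z ^ m + ∑ j ∈ Finset.range m, (u j : ℂ) * z ^ j ≠ 0 := by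
  have hnn : ∀ j ∈ Finset.Icc 1 m, 0 ≤ u (j - 1) - u j := by
    intro j hj
    simp only [Finset.mem_Icc] at hj
    rcases eq_or_lt_of_le hj.2 with h | h
    · subst h; linarith
    · have h2 := hmono (j - 1) (by omega)
      have h3 : j - 1 + 1 = j := by omega
      rw [h3] at h2
      linarith
  have habs : ∀ j ∈ Finset.Icc 1 m,
      ‖((u (j - 1) - u j : ℝ) : ℂ) * z ^ j‖ ≤ u (j - 1) - u j := by
    intro j hj
    rw [norm_mul, Complex.norm_real, Real.norm_eq_abs, norm_pow, abs_of_nonneg (hnn j hj)]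
    exact mul_le_of_le_one_right (hnn j hj)
      (pow_le_one₀ (norm_nonneg z) hz.le)
  have hpow : ‖z‖ ^ (m + 1) < 1 :=
    pow_lt_one₀ (norm_nonneg z) hz (by omega)
  have hp1 : ‖z ^ (m + 1) +
      ∑ j ∈ Finset.Icc 1 m, ((u (j - 1) - u j : ℝ) : ℂ) * z ^ j‖ < u 0 := by
    calc ‖z ^ (m + 1) + ∑ j ∈ Finset.Icc 1 m, ((u (j - 1) - u j : ℝ) : ℂ) * z ^ j‖
        ≤ ‖z ^ (m + 1)‖ +
          ‖∑ j ∈ Finset.Icc 1 m, ((u (j - 1) - u j : ℝ) : ℂ) * z ^ j‖ :=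
          norm_add_le _ _
      _ ≤ ‖z‖ ^ (m + 1) + ∑ j ∈ Finset.Icc 1 m, (u (j - 1) - u j) := by
          rw [norm_pow]
          exact add_le_add_right ((norm_sum_le _ _).trans (Finset.sum_le_sum habs)) _
      _ = ‖z‖ ^ (m + 1) + (u 0 - 1) := by rw [improper_aux_tel, hum]
      _ < u 0 := by linarith
  refine ⟨hp1, fun hQ => ?_⟩
  have hid := improper_aux_sum u z m
  rw [hum] at hid
  have : z ^ (m + 1) + ∑ j ∈ Finset.Icc 1 m, ((u (j - 1) - u j : ℝ) : ℂ) * z ^ j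
      = (z - 1) * (z ^ m + ∑ j ∈ Finset.range m, (u j : ℂ) * z ^ j) + (u 0 : ℂ) := by
    rw [hid]; push_cast; ring
  rw [this, hQ, mul_zero, zero_add, Complex.norm_real, Real.norm_eq_abs] at hp1
  exact absurd hp1 (not_lt.2 (le_abs_self _))
end

section
/- Every complex root z₀ of an improper polynomial Q(z) = z^m + u_{m-1}z^{m-1} + ... + u_0 satisfies |z₀| ≤ max(u_0/u_1, u_1/u_2, ..., u_{m-2}/u_{m-1}, u_{m-1}). -/
/-- Every complex root of an improper polynomial has modulus at most
    max(u_0/u_1, ..., u_{m-2}/u_{m-1}, u_{m-1}). -/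
theorem improper_root_abs_le_max (m : ℕ) (hm : 1 ≤ m) (u : ℕ → ℝ)
    (h1 : 1 ≤ u (m - 1))
    (hmono : ∀ j, j + 1 ≤ m - 1 → u (j + 1) ≤ u j)
    (z₀ : ℂ)
    (hroot : z₀ ^ m + ∑ j ∈ Finset.range m, (u j : ℂ) * z₀ ^ j = 0) :
    ‖z₀‖ ≤
      (Finset.range m).sup' (Finset.nonempty_range_iff.mpr (by omega))
        (fun j => if j + 1 < m then u j / u (j + 1) else u (m - 1)) := by
  by_contra hc
  push_neg at hc
  obtain ⟨n, rfl⟩ : ∃ n, m = n + 1 := ⟨m - 1, by omega⟩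
  simp only [Nat.add_sub_cancel] at *
  set M := (Finset.range (n+1)).sup' (Finset.nonempty_range_iff.mpr (by omega))
        (fun j => if j + 1 < n + 1 then u j / u (j + 1) else u n) with hMdef
  set r := ‖z₀‖ with hr
  -- u j ≥ 1 for j ≤ n
  have hupos : ∀ k, k ≤ n → 1 ≤ u (n - k) := by
    intro k hk
    induction k with
    | zero => simpa using h1
    | succ l ih =>
      have h1' : 1 ≤ u (n - l) := ih (by omega)
      have h2 := hmono (n - (l+1)) (by omega)
      have heq : n - (l+1) + 1 = n - l := by omega
      rw [heq] at h2
      linarith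
  have hu1 : ∀ j, j ≤ n → 1 ≤ u j := by
    intro j hj
    have := hupos (n - j) (by omega)
    have heq : n - (n - j) = j := by omega
    rwa [heq] at this
  have hMlast : u n ≤ M := by
    have h := Finset.le_sup' (fun j => if j + 1 < n + 1 then u j / u (j + 1) else u n)
      (Finset.mem_range.mpr (show n < n + 1 by omega))
    have h' : (if n + 1 < n + 1 then u n / u (n + 1) else u n) ≤ M := h
    rwa [if_neg (lt_irrefl _)] at h'
  have hM1 : (1:ℝ) ≤ M := le_trans (hu1 n le_rfl) hMlast
  have hrM : M < r := hc
  have hr1 : (1:ℝ) < r := lt_of_le_of_lt hM1 hrM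
  have hratio : ∀ k, k + 1 ≤ n → u k ≤ M * u (k + 1) := by
    intro k hk
    have h := Finset.le_sup' (fun j => if j + 1 < n + 1 then u j / u (j + 1) else u n)
      (Finset.mem_range.mpr (show k < n + 1 by omega))
    rw [if_pos (by omega)] at h
    have hpos : (0:ℝ) < u (k+1) := lt_of_lt_of_le one_pos (hu1 (k+1) hk)
    rw [div_le_iff₀ hpos] at h
    linarith [h]
  -- key induction
  have hkey : ∀ N, N ≤ n →
      M * u 0 + ∑ k ∈ Finset.range N, (M * u (k+1) - u k) * r^(k+1) ≤ u N * r^(N+1) := by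
    intro N hN
    induction N with
    | zero =>
      simp only [Finset.range_zero, Finset.sum_empty, add_zero]
      have h0 : (0:ℝ) < u 0 := lt_of_lt_of_le one_pos (hu1 0 (by omega))
      have hr0 : r ^ (0 + 1) = r := by norm_num
      rw [hr0]
      nlinarith [mul_le_mul_of_nonneg_right (le_of_lt hrM) (le_of_lt h0)]
    | succ N ih =>
      have ih' := ih (by omega)
      rw [Finset.sum_range_succ]
      have h1' : M * u (N+1) - u N ≥ 0 := by
        have := hratio N (by omega)
        linarith
      have hrp : (0:ℝ) < r ^ (N+1) := pow_pos (by linarith) _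
      have huN1 : (0:ℝ) < u (N+1) := lt_of_lt_of_le one_pos (hu1 (N+1) hN)
      have step : u N * r^(N+1) + (M * u (N+1) - u N) * r^(N+1) ≤ u (N+1) * r^(N+2) := by
        have : M * u (N+1) * r^(N+1) ≤ r * u (N+1) * r^(N+1) := by
          apply mul_le_mul_of_nonneg_right _ (le_of_lt hrp)
          nlinarith
        calc u N * r^(N+1) + (M * u (N+1) - u N) * r^(N+1) = M * u (N+1) * r^(N+1) := by ring
          _ ≤ r * u (N+1) * r^(N+1) := this
          _ = u (N+1) * r^(N+2) := by ring
      linarith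
  -- complex identity
  have hS : ∑ j ∈ Finset.range (n+1), (u j:ℂ) * z₀^j = -z₀^(n+1) := by
    linear_combination hroot
  have hmulS : ∑ j ∈ Finset.range (n+1), (u j:ℂ) * z₀^(j+1)
      = z₀ * ∑ j ∈ Finset.range (n+1), (u j:ℂ) * z₀^j := by
    rw [Finset.mul_sum]; apply Finset.sum_congr rfl; intros; ring
  have e1 : ∑ j ∈ Finset.range (n+1), (u j:ℂ) * z₀^(j+1)
      = (u n:ℂ) * z₀^(n+1) + ∑ k ∈ Finset.range n, (u k:ℂ) * z₀^(k+1) := by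
    rw [Finset.sum_range_succ]; ring
  have e2 : ∑ j ∈ Finset.range (n+1), (M:ℂ) * (u j:ℂ) * z₀^j
      = (M:ℂ) * (u 0:ℂ) + ∑ k ∈ Finset.range n, (M:ℂ) * (u (k+1):ℂ) * z₀^(k+1) := by
    rw [Finset.sum_range_succ']; ring
  have e3 : (M:ℂ) * ∑ j ∈ Finset.range (n+1), (u j:ℂ) * z₀^j
      = ∑ j ∈ Finset.range (n+1), (M:ℂ) * (u j:ℂ) * z₀^j := by
    rw [Finset.mul_sum]; apply Finset.sum_congr rfl; intros; ring
  have hsub : ∑ k ∈ Finset.range n, ((M * u (k+1) - u k : ℝ):ℂ) * z₀^(k+1)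
      = ∑ k ∈ Finset.range n, (M:ℂ) * (u (k+1):ℂ) * z₀^(k+1)
        - ∑ k ∈ Finset.range n, (u k:ℂ) * z₀^(k+1) := by
    rw [← Finset.sum_sub_distrib]; apply Finset.sum_congr rfl; intros; push_cast; ring
  have hid : z₀^(n+2) = ((M - u n : ℝ):ℂ) * z₀^(n+1) + ((M * u 0 : ℝ):ℂ)
      + ∑ k ∈ Finset.range n, ((M * u (k+1) - u k : ℝ):ℂ) * z₀^(k+1) := by
    rw [hsub]
    push_cast
    linear_combination -e1 + e2 + hmulS + e3 + (z₀ - (M:ℂ)) * hS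
  -- take abs
  have habs : r^(n+2) ≤ (M - u n) * r^(n+1) + M * u 0
      + ∑ k ∈ Finset.range n, (M * u (k+1) - u k) * r^(k+1) := by
    have h0 : r^(n+2) = ‖z₀^(n+2)‖ := by rw [norm_pow]
    rw [h0, hid]
    have t1 : ‖((M - u n : ℝ):ℂ) * z₀^(n+1)‖ = (M - u n) * r^(n+1) := by
      rw [norm_mul, norm_pow, Complex.norm_real, Real.norm_eq_abs, abs_of_nonneg (by linarith : (0:ℝ) ≤ M - u n)]
    have t2 : ‖((M * u 0 : ℝ):ℂ)‖ = M * u 0 := by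
      rw [Complex.norm_real, Real.norm_eq_abs]
      have h0 : (0:ℝ) < u 0 := lt_of_lt_of_le one_pos (hu1 0 (by omega))
      exact abs_of_nonneg (by nlinarith)
    calc ‖((M - u n : ℝ):ℂ) * z₀^(n+1) + ((M * u 0 : ℝ):ℂ)
          + ∑ k ∈ Finset.range n, ((M * u (k+1) - u k : ℝ):ℂ) * z₀^(k+1)‖
        ≤ ‖((M - u n : ℝ):ℂ) * z₀^(n+1) + ((M * u 0 : ℝ):ℂ)‖
          + ‖∑ k ∈ Finset.range n, ((M * u (k+1) - u k : ℝ):ℂ) * z₀^(k+1)‖ :=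
        norm_add_le _ _
      _ ≤ ‖((M - u n : ℝ):ℂ) * z₀^(n+1)‖ + ‖((M * u 0 : ℝ):ℂ)‖
          + ∑ k ∈ Finset.range n, ‖((M * u (k+1) - u k : ℝ):ℂ) * z₀^(k+1)‖ := by
        gcongr
        · exact norm_add_le _ _
        · exact norm_sum_le _ _
      _ ≤ (M - u n) * r^(n+1) + M * u 0
          + ∑ k ∈ Finset.range n, (M * u (k+1) - u k) * r^(k+1) := by
        rw [t1, t2]
        gcongr with k hk
        rw [norm_mul, norm_pow, Complex.norm_real, Real.norm_eq_abs]
        have hk' : k + 1 ≤ n := Finset.mem_range.mp hk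
        rw [abs_of_nonneg (by linarith [hratio k hk'] : (0:ℝ) ≤ M * u (k+1) - u k)]
  -- conclude contradiction
  have hfin := hkey n le_rfl
  have hrp : (0:ℝ) < r ^ (n+1) := pow_pos (by linarith) _
  have : r^(n+2) ≤ M * r^(n+1) := by
    calc r^(n+2) ≤ (M - u n) * r^(n+1) + M * u 0
        + ∑ k ∈ Finset.range n, (M * u (k+1) - u k) * r^(k+1) := habs
      _ ≤ (M - u n) * r^(n+1) + u n * r^(n+1) := by linarith
      _ = M * r^(n+1) := by ring
  have : r * r^(n+1) ≤ M * r^(n+1) := by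
    calc r * r^(n+1) = r^(n+2) := by ring
      _ ≤ M * r^(n+1) := this
  nlinarith
end

section
/- Let Φ ∈ ℂ[C] be a nonzero polynomial of degree at most T with Φ(0) ≠ 0, such that Φ(C) = Ψ(C^r) for some polynomial Ψ and r ≥ 1, and suppose a ≠ 0 is a root of Φ of multiplicity m with r·m = deg Φ = T. Then Φ(C) = u·(C^r − a^r)^m for some u ∈ ℂ*. -/
/-!
Write `b = a ^ r`. Since `X ^ r - b` has the simple root `a`, the multiplicity of `a` in
`Ψ(X ^ r)` equals the multiplicity of `b` in `Ψ`. Hence `b` is a root of `Ψ` of multiplicity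
`m = deg Ψ`, which forces `Ψ = u (X - b) ^ m`, and substituting `X ^ r` gives the claim.
-/

namespace Polynomial

theorem rootMultiplicity_pow {R : Type*} [CommRing R] [IsDomain R] (a : R) (p : R[X]) (n : ℕ) :
    rootMultiplicity a (p ^ n) = n * rootMultiplicity a p := by
  classical
  rw [← count_roots, roots_pow, Multiset.count_nsmul, count_roots]

section Field

variable {K : Type*} [Field K] {r : ℕ}

theorem rootMultiplicity_X_pow_sub_C_pow_self (hr : (r : K) ≠ 0) {a : K} (ha : a ≠ 0) :
    rootMultiplicity a (X ^ r - C (a ^ r)) = 1 := by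
  have hsep := separable_X_pow_sub_C (a ^ r) hr (pow_ne_zero r ha)
  have hpos : 0 < rootMultiplicity a (X ^ r - C (a ^ r)) :=
    (rootMultiplicity_pos hsep.ne_zero).mpr (by simp)
  exact le_antisymm (rootMultiplicity_le_one_of_separable hsep a) hpos

theorem rootMultiplicity_comp_X_pow (hr : (r : K) ≠ 0) {a : K} (ha : a ≠ 0) (p : K[X]) :
    rootMultiplicity a (p.comp (X ^ r)) = rootMultiplicity (a ^ r) p := by
  rcases eq_or_ne p 0 with rfl | hp
  · simp
  set k := rootMultiplicity (a ^ r) p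
  set q := p /ₘ (X - C (a ^ r)) ^ k
  have hq : ¬ (q.comp (X ^ r)).IsRoot a := by
    rw [IsRoot, eval_comp, eval_pow, eval_X]
    exact eval_divByMonic_pow_rootMultiplicity_ne_zero (a ^ r) hp
  have hbinom : (X : K[X]) ^ r - C (a ^ r) ≠ 0 :=
    (separable_X_pow_sub_C (a ^ r) hr (pow_ne_zero r ha)).ne_zero
  have hq0 : q.comp (X ^ r) ≠ 0 := fun h => hq (by simp [h])
  conv_lhs => rw [← pow_mul_divByMonic_rootMultiplicity_eq p (a ^ r)]
  rw [mul_comp, pow_comp, sub_comp, X_comp, C_comp,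
    rootMultiplicity_mul (mul_ne_zero (pow_ne_zero k hbinom) hq0), rootMultiplicity_pow,
    rootMultiplicity_X_pow_sub_C_pow_self hr ha, rootMultiplicity_eq_zero hq, mul_one, add_zero]

end Field

theorem eq_C_leadingCoeff_mul_X_sub_C_pow {R : Type*} [CommRing R] [Nontrivial R] {p : R[X]}
    {b : R} (h : p.natDegree ≤ rootMultiplicity b p) :
    p = C p.leadingCoeff * (X - C b) ^ p.natDegree :=
  eq_leadingCoeff_mul_of_monic_of_dvd_of_natDegree_le ((monic_X_sub_C b).pow _)
    ((pow_dvd_pow _ h).trans (pow_rootMultiplicity_dvd p b))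
    (by rw [(monic_X_sub_C b).natDegree_pow, natDegree_X_sub_C, mul_one])

end Polynomial

open Polynomial in
theorem poly_eq_pow_binomial_general (r m : ℕ) (hr : 1 ≤ r)
    (Φ Ψ : ℂ[X]) (hΦ0 : Φ ≠ 0)
    (hcomp : Φ = Ψ.comp (X ^ r))
    (a : ℂ) (ha : a ≠ 0)
    (hmult : rootMultiplicity a Φ = m)
    (hdeg : Φ.natDegree = r * m) :
    ∃ u : ℂ, u ≠ 0 ∧ Φ = C u * (X ^ r - C (a ^ r)) ^ m := by
  have hΨ0 : Ψ ≠ 0 := by rintro rfl; exact hΦ0 (by simpa using hcomp)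
  have hΨdeg : Ψ.natDegree = m := by
    rw [hcomp, natDegree_comp, natDegree_X_pow, mul_comm] at hdeg
    exact Nat.eq_of_mul_eq_mul_left hr hdeg
  have hΨmult : rootMultiplicity (a ^ r) Ψ = m := by
    rw [← rootMultiplicity_comp_X_pow (by norm_cast; omega) ha, ← hcomp, hmult]
  have hΨeq := eq_C_leadingCoeff_mul_X_sub_C_pow (b := a ^ r) (hΨdeg.trans hΨmult.symm).le
  refine ⟨Ψ.leadingCoeff, leadingCoeff_ne_zero.mpr hΨ0, ?_⟩
  rw [hcomp]
  nth_rw 1 [hΨeq]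
  rw [hΨdeg, mul_comp, C_comp, pow_comp, sub_comp, X_comp, C_comp]

open Polynomial in
/-- If Φ(0) ≠ 0, Φ(C) = Ψ(C^r), and a ≠ 0 is a root of Φ of multiplicity m with
    deg Φ = r·m, then Φ(C) = u (C^r - a^r)^m for some u ≠ 0. -/
theorem poly_eq_pow_binomial (T r m : ℕ) (hr : 1 ≤ r)
    (Φ Ψ : ℂ[X]) (hΦ0 : Φ ≠ 0) (h0 : Φ.eval 0 ≠ 0)
    (hcomp : Φ = Ψ.comp (X ^ r))
    (a : ℂ) (ha : a ≠ 0) (hroot : Φ.eval a = 0)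
    (hmult : rootMultiplicity a Φ = m)
    (hdeg : Φ.natDegree = r * m) (hT : Φ.natDegree = T) :
    ∃ u : ℂ, u ≠ 0 ∧ Φ = C u * (X ^ r - C (a ^ r)) ^ m :=
  poly_eq_pow_binomial_general r m hr Φ Ψ hΦ0 hcomp a ha hmult hdeg
end

section
/- Suppose real numbers T_k, B_k for k = 0,...,N and integers ρ_k ≥ 1 satisfy: T_{k+1} ≤ B_k for all k < N, B_N ≥ 1, and for each k either (non-dicritical) B_k ≤ T_k/ρ_k, or (dicritical) B_k ≤ T_k/ρ_k + (ρ_k − 1)/ρ_k. Let D ⊆ {0,...,N} be the set of dicritical indices with elements i_1 < ... < i_d. Then T_0 ≥ ∏_{k=0}^N ρ_k − Σ_{m=1}^d (∏_{k=0}^{i_m} ρ_k − ∏_{k=0}^{i_m − 1} ρ_k). -/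
set_option maxRecDepth 4000


/-- Abstract combinatorial core of Theorem A, allowing dicritical steps. -/
theorem descent_with_dicriticals (N : ℕ) (T B : ℕ → ℝ) (ρ : ℕ → ℕ)
    (hρ : ∀ k ≤ N, 1 ≤ ρ k)
    (D : Finset ℕ) (hD : D ⊆ Finset.range (N + 1))
    (hdic : ∀ k ≤ N, k ∈ D → B k ≤ T k / ρ k + ((ρ k : ℝ) - 1) / ρ k)
    (hnon : ∀ k ≤ N, k ∉ D → B k ≤ T k / ρ k)
    (hchain : ∀ k < N, T (k + 1) ≤ B k)
    (hBN : 1 ≤ B N) :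
    (∏ k ∈ Finset.range (N + 1), (ρ k : ℝ)) -
        ∑ i ∈ D, ((∏ k ∈ Finset.range (i + 1), (ρ k : ℝ)) -
          ∏ k ∈ Finset.range i, (ρ k : ℝ)) ≤ T 0 := by
  set P : ℕ → ℕ → ℝ := fun j i => ∏ k ∈ Finset.Ico j i, (ρ k : ℝ) with hP
  set S : ℕ → ℝ := fun j => ∑ i ∈ D, (if j ≤ i then P j (i + 1) - P j i else 0) with hS
  have hρ0 : ∀ k ≤ N, (1 : ℝ) ≤ ρ k := fun k hk => by exact_mod_cast hρ k hk
  have hT : ∀ k ≤ N, (ρ k : ℝ) * B k - (if k ∈ D then (ρ k : ℝ) - 1 else 0) ≤ T k := by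
    intro k hk
    have h1 : (0 : ℝ) < ρ k := lt_of_lt_of_le one_pos (hρ0 k hk)
    by_cases hkD : k ∈ D
    · have h := hdic k hk hkD
      rw [← add_div, le_div_iff₀ h1] at h
      simp only [hkD, if_pos]
      linarith
    · have h := hnon k hk hkD
      rw [le_div_iff₀ h1] at h
      simp only [hkD, if_neg, not_false_iff]
      linarith
  have hstep : ∀ j ≤ N, P j (N + 1) - S j
      = (ρ j : ℝ) * (P (j + 1) (N + 1) - S (j + 1)) - (if j ∈ D then (ρ j : ℝ) - 1 else 0) := by
    intro j hj
    have hprod : P j (N + 1) = (ρ j : ℝ) * P (j + 1) (N + 1) :=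
      Finset.prod_eq_prod_Ico_succ_bot (Nat.lt_succ_of_le hj) _
    have hsum : S j = (if j ∈ D then (ρ j : ℝ) - 1 else 0) + (ρ j : ℝ) * S (j + 1) := by
      have : S j = ∑ i ∈ D, ((if i = j then (ρ j : ℝ) - 1 else 0)
          + (ρ j : ℝ) * (if j + 1 ≤ i then P (j + 1) (i + 1) - P (j + 1) i else 0)) := by
        apply Finset.sum_congr rfl
        intro i hi
        by_cases hij : i = j
        · subst hij
          have h1 : P i (i + 1) = (ρ i : ℝ) := by
            rw [hP]; simp [Nat.Ico_succ_singleton]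
          have h2 : P i i = 1 := by simp [hP]
          simp only [le_refl, if_true, if_pos rfl, if_neg (by omega : ¬ i + 1 ≤ i), h1, h2]
          ring
        · by_cases hji : j ≤ i
          · have hji' : j + 1 ≤ i := by omega
            have hji'' : j < i + 1 := by omega
            simp only [if_pos hji, if_pos hji', if_neg hij]
            rw [show P j (i + 1) = (ρ j : ℝ) * P (j + 1) (i + 1) from
                Finset.prod_eq_prod_Ico_succ_bot hji'' _,
              show P j i = (ρ j : ℝ) * P (j + 1) i from
                Finset.prod_eq_prod_Ico_succ_bot (by omega) _]
            ring
          · simp only [if_neg hji, if_neg hij, if_neg (by omega : ¬ j + 1 ≤ i)]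
            ring
      rw [this, Finset.sum_add_distrib, ← Finset.mul_sum, Finset.sum_ite_eq' D j]
    rw [hprod, hsum]; ring
  have hSN : S (N + 1) = 0 := by
    apply Finset.sum_eq_zero
    intro i hi
    have : i < N + 1 := Finset.mem_range.mp (hD hi)
    rw [if_neg (by omega)]
  have main : ∀ d j, j + d = N → P j (N + 1) - S j ≤ T j := by
    intro d
    induction d with
    | zero =>
      intro j hj
      have hjN : j = N := by omega
      subst hjN
      rw [hstep j le_rfl]
      have hPN : P (j + 1) (j + 1) = 1 := by simp [hP]
      rw [hPN, hSN]
      have hρnn : (0 : ℝ) ≤ (ρ j : ℝ) := by positivity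
      have := hT j le_rfl
      have hB : (ρ j : ℝ) * 1 ≤ (ρ j : ℝ) * B j := by
        apply mul_le_mul_of_nonneg_left hBN hρnn
      rw [sub_zero]
      linarith
    | succ d ih =>
      intro j hj
      have hjN : j ≤ N := by omega
      have hjlt : j < N := by omega
      have hkey := ih (j + 1) (by omega)
      rw [hstep j hjN]
      have hρnn : (0 : ℝ) ≤ (ρ j : ℝ) := by positivity
      have h1 : (ρ j : ℝ) * (P (j + 1) (N + 1) - S (j + 1)) ≤ (ρ j : ℝ) * T (j + 1) :=
        mul_le_mul_of_nonneg_left hkey hρnn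
      have h2 : (ρ j : ℝ) * T (j + 1) ≤ (ρ j : ℝ) * B j :=
        mul_le_mul_of_nonneg_left (hchain j hjlt) hρnn
      have := hT j hjN
      linarith
  have hfinal := main N 0 (by omega)
  have hP0 : P 0 (N + 1) = ∏ k ∈ Finset.range (N + 1), (ρ k : ℝ) := by
    rw [hP, Finset.range_eq_Ico]
  have hS0 : S 0 = ∑ i ∈ D, ((∏ k ∈ Finset.range (i + 1), (ρ k : ℝ))
      - ∏ k ∈ Finset.range i, (ρ k : ℝ)) := by
    apply Finset.sum_congr rfl
    intro i _
    rw [if_pos (Nat.zero_le i), hP, Finset.range_eq_Ico, Finset.range_eq_Ico]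
  rw [hP0, hS0] at hfinal
  exact hfinal
end

section
/- With the recursion R_k = −k/n and R_{j+1} = ρ_{j+1} R_j + (ρ_{j+1} − 1)·(j+1)/n where ρ_j ≥ 1 are integers and n ≥ 1: if R_j ≥ −j/n then R_{j+1} ≥ −j/n > −(j+1)/n; hence by induction R_j ≥ −k/n > −j/n for all j > k, so R_j ≠ −m/n for every integer m > j. -/
/-! Shifting by `k/n`, the recursion reads
`R (j+1) + k/n = ρ (j+1) * (R j + k/n) + (ρ (j+1) - 1) * (j + 1 - k) / n`,
so with `ρ ≥ 1` and `j + 1 ≥ k` nonnegativity of `R j + k/n` propagates: `R j ≥ -k/n` for all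
`j ≥ k`. For `j > k` this gives `R j > -j/n > -m/n` whenever `m > j`. -/

theorem le_mul_add_sub_one_mul {a x ρ c : ℝ} (hx : a ≤ x) (hρ : 1 ≤ ρ) (hc : -a ≤ c) :
    a ≤ ρ * x + (ρ - 1) * c := by
  nlinarith [mul_nonneg (sub_nonneg.2 hρ) (neg_le_iff_add_nonneg.1 hc)]

theorem neg_div_le_of_recursion {n k : ℕ} {ρ : ℕ → ℕ} (hρ : ∀ j, 1 ≤ ρ j)
    {R : ℕ → ℝ} (hbase : R k = -(k : ℝ) / n)
    (hrec : ∀ j, k ≤ j →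
      R (j + 1) = (ρ (j + 1) : ℝ) * R j + ((ρ (j + 1) : ℝ) - 1) * (j + 1) / n) :
    ∀ j, k ≤ j → -(k : ℝ) / n ≤ R j := by
  intro j hj
  induction j, hj using Nat.le_induction with
  | base => exact hbase.ge
  | succ j hj ih =>
    have hkj : (k : ℝ) ≤ j + 1 := by exact_mod_cast hj.trans j.le_succ
    rw [hrec j hj, mul_div_assoc]
    refine le_mul_add_sub_one_mul ih (by exact_mod_cast hρ (j + 1)) ?_
    rw [neg_div, neg_neg]
    gcongr

theorem residue_differential_case_general (n k : ℕ) (hn : 1 ≤ n)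
    (ρ : ℕ → ℕ) (hρ : ∀ j, 1 ≤ ρ j) (R : ℕ → ℝ)
    (hbase : R k = -(k : ℝ) / n)
    (hrec : ∀ j, k ≤ j →
      R (j + 1) = (ρ (j + 1) : ℝ) * R j + ((ρ (j + 1) : ℝ) - 1) * (j + 1) / n) :
    ∀ j, k < j →
      R j ≥ -(k : ℝ) / n ∧ R j > -(j : ℝ) / n ∧
        ∀ m : ℕ, j < m → R j ≠ -(m : ℝ) / n := by
  have hn' : (0 : ℝ) < n := by exact_mod_cast hn
  have neg_div_strictAnti : StrictAnti fun i : ℕ => -(i : ℝ) / n := fun a b hab => by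
    simp only [neg_div, neg_lt_neg_iff]
    exact div_lt_div_of_pos_right (by exact_mod_cast hab) hn'
  intro j hkj
  have hge := neg_div_le_of_recursion hρ hbase hrec j hkj.le
  have hgt : R j > -(j : ℝ) / n := (neg_div_strictAnti hkj).trans_le hge
  refine ⟨hge, hgt, fun m hjm heq => (neg_div_strictAnti hjm).not_gt ?_⟩
  rwa [heq] at hgt

/-- Differential-case residue argument: the residues stay ≥ -k/n > -j/n, hence
    never equal -m/n for m > j. -/
theorem residue_differential_case (n k : ℕ) (hn : 1 ≤ n) (hk : 1 ≤ k)
    (ρ : ℕ → ℕ) (hρ : ∀ j, 1 ≤ ρ j) (R : ℕ → ℝ)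
    (hbase : R k = -(k : ℝ) / n)
    (hrec : ∀ j, k ≤ j →
      R (j + 1) = (ρ (j + 1) : ℝ) * R j + ((ρ (j + 1) : ℝ) - 1) * (j + 1) / n) :
    ∀ j, k < j →
      R j ≥ -(k : ℝ) / n ∧ R j > -(j : ℝ) / n ∧
        ∀ m : ℕ, j < m → R j ≠ -(m : ℝ) / n :=
  residue_differential_case_general n k hn ρ hρ R hbase hrec
end
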